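/- arXiv:1302.5736 — 3 statements merged into one kernel-verified Lean document; each statement's English description precedes it below -/
import Mathlib

section
/- Let M_{abel,m} be the commutative monoid generated by a, b subject to a^m = b^m (m ≥ 2), realized as ℕ² / ∼ where (p,q) ∼ (p',q') iff they are connected by moves replacing m copies of a with m copies of b or vice versa. Then M_{abel,m} is cancellative. -/
/-- The congruence on `ℕ²` generated by `(m,0) ∼ (0,m)`. -/
def abelRel (m : ℕ) : ℕ × ℕ → ℕ × ℕ → Prop :=
  fun p q => p = (m, 0) ∧ q = (0, m)

/-- `M_{abel,m} = ⟨a,b | aᵐ = bᵐ, ab = ba⟩` as a quotient of `ℕ²`. -/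
def MAbel (m : ℕ) := (addConGen (abelRel m)).Quotient

instance (m : ℕ) : AddCommMonoid (MAbel m) :=
  inferInstanceAs (AddCommMonoid (addConGen (abelRel m)).Quotient)

/-! The map `(p, q) ↦ (p + q, p mod m)` into the cancellative monoid `ℕ × ℤ/mℤ` is a complete
invariant of the congruence: it identifies `(m, 0)` with `(0, m)`, and two pairs with the same
value differ by `k` moves `(m, 0) ↦ (0, m)` in one direction or the other. Hence `M_{abel,m}`
embeds into `ℕ × ℤ/mℤ`, so it is cancellative. -/

def abelInvariant (m : ℕ) : ℕ × ℕ →+ ℕ × ZMod m :=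
  (AddMonoidHom.fst ℕ ℕ + AddMonoidHom.snd ℕ ℕ).prod
    ((Nat.castAddMonoidHom (ZMod m)).comp (AddMonoidHom.fst ℕ ℕ))

lemma abelInvariant_eq_iff {m : ℕ} {x y : ℕ × ℕ} :
    abelInvariant m x = abelInvariant m y ↔ x.1 + x.2 = y.1 + y.2 ∧ x.1 ≡ y.1 [MOD m] := by
  simp [abelInvariant, ZMod.natCast_eq_natCast_iff]

lemma addConGen_abelRel_add_nsmul (m : ℕ) (x : ℕ × ℕ) (k : ℕ) :
    addConGen (abelRel m) (x + k • (m, 0)) (x + k • (0, m)) :=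
  (addConGen (abelRel m)).add ((addConGen (abelRel m)).refl x)
    ((addConGen (abelRel m)).nsmul k (AddConGen.Rel.of _ _ ⟨rfl, rfl⟩))

theorem addConGen_abelRel (m : ℕ) : addConGen (abelRel m) = AddCon.ker (abelInvariant m) := by
  refine le_antisymm (AddCon.addConGen_le.mpr ?_) fun x y hxy => ?_
  · rintro _ _ ⟨rfl, rfl⟩
    simp [AddCon.ker_rel, abelInvariant_eq_iff, Nat.ModEq, Nat.mod_self]
  · obtain ⟨hsum, hmod⟩ := abelInvariant_eq_iff.mp hxy
    wlog hle : y.1 ≤ x.1 generalizing x y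
    · exact (this y x hxy.symm hsum.symm hmod.symm (by omega)).symm
    obtain ⟨k, hk⟩ := (Nat.modEq_iff_dvd' hle).mp hmod.symm
    convert addConGen_abelRel_add_nsmul m (y.1, x.2) k using 1 <;> ext <;> simp <;> grind

theorem stmt_5_general (m : ℕ) :
    ∀ x y z : MAbel m, x + z = y + z → x = y := by
  intro x y z
  induction x using AddCon.induction_on with | H x =>
  induction y using AddCon.induction_on with | H y =>
  induction z using AddCon.induction_on with | H z =>
  intro h
  have h' : ((x + z : ℕ × ℕ) : (addConGen (abelRel m)).Quotient) = (y + z : ℕ × ℕ) := h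
  rw [AddCon.eq, addConGen_abelRel, AddCon.ker_rel, map_add, map_add] at h'
  exact (AddCon.eq _).mpr (by rw [addConGen_abelRel]; exact add_right_cancel h')

/-- The monoid `M_{abel,m}` is cancellative. -/
theorem stmt_5 (m : ℕ) (hm : 2 ≤ m) :
    ∀ x y z : MAbel m, x + z = y + z → x = y :=
  stmt_5_general m
end

section
/- In the monoid M_{abel,m} = ⟨a,b | a^m = b^m, ab=ba⟩_mo with m ≥ 2, if a·X = b·Y for elements X, Y, then either X = a^{m-1}·Z and Y = b^{m-1}·Z for some Z, or X = b·Z and Y = a·Z for some Z. -/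
/-- The generator `a` of `M_{abel,m}`. -/
def MAbel.a (m : ℕ) : MAbel m := (addConGen (abelRel m)).mk' (1, 0)

/-- The generator `b` of `M_{abel,m}`. -/
def MAbel.b (m : ℕ) : MAbel m := (addConGen (abelRel m)).mk' (0, 1)

/-!
Two words `aˣ¹bʸ¹` and `aˣ²bʸ²` are equal in `M_{abel,m}` exactly when they have the same length
and `x₁ ≡ x₂ [MOD m]`. Writing `X = aˣbʸ`, `Y = aᵘbᵛ`, the equation `aX = bY` thus says
`x + y = u + v` and `x + 1 ≡ u [MOD m]`. If `u > 0`, then `Z = aᵘ⁻¹bᵛ` gives `Y = aZ` and `X = bZ`;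
if `u = 0`, then `m ∣ x + 1`, so `x ≥ m - 1` and `Z = aˣ⁻⁽ᵐ⁻¹⁾bʸ` gives `X = aᵐ⁻¹Z` and `Y = bᵐ⁻¹Z`.
-/

def abelCon (m : ℕ) : AddCon (ℕ × ℕ) where
  r p q := p.1 + p.2 = q.1 + q.2 ∧ p.1 ≡ q.1 [MOD m]
  iseqv := ⟨fun _ => ⟨rfl, rfl⟩, fun ⟨h₁, h₂⟩ => ⟨h₁.symm, h₂.symm⟩,
    fun ⟨h₁, h₂⟩ ⟨h₃, h₄⟩ => ⟨h₁.trans h₃, h₂.trans h₄⟩⟩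
  add' := fun ⟨h₁, h₂⟩ ⟨h₃, h₄⟩ => ⟨by dsimp; omega, h₂.add h₄⟩

theorem addConGen_abelRel_add_mul (m k x y : ℕ) :
    addConGen (abelRel m) (x + k * m, y) (x, y + k * m) := by
  have hgen : addConGen (abelRel m) (m, 0) (0, m) := AddConGen.Rel.of _ _ ⟨rfl, rfl⟩
  have h := ((addConGen (abelRel m)).nsmul k hgen).add ((addConGen (abelRel m)).refl (x, y))
  have hl : k • ((m, 0) : ℕ × ℕ) + (x, y) = (x + k * m, y) := by ext <;> simp [Nat.add_comm]
  have hr : k • ((0, m) : ℕ × ℕ) + (x, y) = (x, y + k * m) := by ext <;> simp [Nat.add_comm]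
  rwa [hl, hr] at h

theorem addConGen_abelRel_of_le {m : ℕ} {p q : ℕ × ℕ} (hle : p.1 ≤ q.1) (h : abelCon m p q) :
    addConGen (abelRel m) p q := by
  obtain ⟨hdeg, hmod⟩ := h
  obtain ⟨k, hk⟩ := (Nat.modEq_iff_exists_eq_add hle).mp hmod
  obtain ⟨p₁, p₂⟩ := p
  obtain ⟨q₁, q₂⟩ := q
  dsimp only at hdeg hk
  obtain rfl : p₂ = q₂ + k * m := by rw [hk] at hdeg; linarith [Nat.mul_comm m k]
  rw [hk, Nat.mul_comm m k]
  exact (AddCon.symm _ (addConGen_abelRel_add_mul m k p₁ q₂))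

theorem addConGen_abelRel_eq (m : ℕ) : addConGen (abelRel m) = abelCon m := by
  refine le_antisymm (AddCon.addConGen_le.mpr ?_) fun p q h => ?_
  · rintro p q ⟨rfl, rfl⟩
    exact ⟨by simp, by simp [Nat.ModEq]⟩
  · rcases le_total p.1 q.1 with hle | hle
    · exact addConGen_abelRel_of_le hle h
    · exact AddCon.symm _ (addConGen_abelRel_of_le hle (AddCon.symm _ h))

namespace MAbel

def mk (m : ℕ) : ℕ × ℕ →+ MAbel m := (addConGen (abelRel m)).mk'

variable {m : ℕ}

theorem mk_surjective : Function.Surjective (mk m) := (addConGen (abelRel m)).mk'_surjective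

theorem mk_eq_mk_iff {p q : ℕ × ℕ} :
    mk m p = mk m q ↔ p.1 + p.2 = q.1 + q.2 ∧ p.1 ≡ q.1 [MOD m] := by
  change ((p : (addConGen (abelRel m)).Quotient) = q) ↔ _
  rw [AddCon.eq, addConGen_abelRel_eq]
  rfl

theorem a_eq : a m = mk m (1, 0) := rfl

theorem b_eq : b m = mk m (0, 1) := rfl

theorem nsmul_a_add_mk (n : ℕ) (p : ℕ × ℕ) : n • a m + mk m p = mk m (n + p.1, p.2) := by
  rw [a_eq, ← map_nsmul, ← map_add]
  congr 1
  ext <;> simp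

theorem nsmul_b_add_mk (n : ℕ) (p : ℕ × ℕ) : n • b m + mk m p = mk m (p.1, n + p.2) := by
  rw [b_eq, ← map_nsmul, ← map_add]
  congr 1
  ext <;> simp

theorem a_add_mk (p : ℕ × ℕ) : a m + mk m p = mk m (1 + p.1, p.2) := by
  rw [← nsmul_a_add_mk, one_nsmul]

theorem b_add_mk (p : ℕ × ℕ) : b m + mk m p = mk m (p.1, 1 + p.2) := by
  rw [← nsmul_b_add_mk, one_nsmul]

end MAbel

theorem stmt_6_general (m : ℕ) (X Y : MAbel m)
    (h : MAbel.a m + X = MAbel.b m + Y) :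
    (∃ Z : MAbel m, X = (m - 1) • MAbel.a m + Z ∧ Y = (m - 1) • MAbel.b m + Z) ∨
    (∃ Z : MAbel m, X = MAbel.b m + Z ∧ Y = MAbel.a m + Z) := by
  obtain ⟨⟨x, y⟩, rfl⟩ := MAbel.mk_surjective X
  obtain ⟨⟨u, v⟩, rfl⟩ := MAbel.mk_surjective Y
  rw [MAbel.a_add_mk, MAbel.b_add_mk, MAbel.mk_eq_mk_iff] at h
  obtain ⟨hdeg, hmod⟩ := h
  dsimp only at hdeg hmod
  rcases u with _ | u
  · have hdvd : m ∣ x + 1 := Nat.modEq_zero_iff_dvd.mp (by rwa [Nat.add_comm] at hmod)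
    have hm : 0 < m := Nat.pos_of_dvd_of_pos hdvd (Nat.succ_pos x)
    have hx : m - 1 ≤ x := Nat.sub_le_of_le_add (Nat.le_of_dvd (Nat.succ_pos x) hdvd)
    refine .inl ⟨MAbel.mk m (x - (m - 1), y), ?_, ?_⟩
    · rw [MAbel.nsmul_a_add_mk, Nat.add_sub_cancel' hx]
    · rw [MAbel.nsmul_b_add_mk, MAbel.mk_eq_mk_iff]
      refine ⟨by dsimp only; omega, (Nat.modEq_zero_iff_dvd.mpr ?_).symm⟩
      rw [show x - (m - 1) = x + 1 - m by omega]
      exact Nat.dvd_sub hdvd dvd_rfl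
  · refine .inr ⟨MAbel.mk m (u, v), ?_, ?_⟩
    · rw [MAbel.b_add_mk, MAbel.mk_eq_mk_iff]
      refine ⟨by dsimp only; omega, Nat.ModEq.add_left_cancel' 1 ?_⟩
      rwa [Nat.add_comm u] at hmod
    · rw [MAbel.a_add_mk, Nat.add_comm]

/-- If `a·X = b·Y` in `M_{abel,m}`, then either `X = a^{m-1}·Z, Y = b^{m-1}·Z`
or `X = b·Z, Y = a·Z` for some `Z`. -/
theorem stmt_6 (m : ℕ) (hm : 2 ≤ m) (X Y : MAbel m)
    (h : MAbel.a m + X = MAbel.b m + Y) :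
    (∃ Z : MAbel m, X = (m - 1) • MAbel.a m + Z ∧ Y = (m - 1) • MAbel.b m + Z) ∨
    (∃ Z : MAbel m, X = MAbel.b m + Z ∧ Y = MAbel.a m + Z) :=
  stmt_6_general m X Y h
end

section
/- In the monoid G⁺_{B_ii} = ⟨a,b,c | cbb = bba, ab = bc, ac = ca⟩_mo, if b·b·X = c·Y for positive words X, Y, then there exists a positive word Z with X = a·Z and Y = b·b·Z (equalities in the monoid). -/
namespace Bii

/-- Letters `a`, `b`, `c` of the free monoid on three letters. -/
def A : FreeMonoid (Fin 3) := FreeMonoid.of 0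
def B : FreeMonoid (Fin 3) := FreeMonoid.of 1
def C : FreeMonoid (Fin 3) := FreeMonoid.of 2

/-- The defining relations `cbb = bba`, `ab = bc`, `ac = ca` of `G⁺_{B_ii}`. -/
def rel : FreeMonoid (Fin 3) → FreeMonoid (Fin 3) → Prop := fun u v =>
  (u = C * B * B ∧ v = B * B * A) ∨ (u = A * B ∧ v = B * C) ∨ (u = A * C ∧ v = C * A)

/-- The monoid `G⁺_{B_ii}`. -/
def GBii := (conGen rel).Quotient

instance : Monoid GBii := inferInstanceAs (Monoid (conGen rel).Quotient)

/-- Generators of `G⁺_{B_ii}`. -/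
def a : GBii := (conGen rel).mk' A
def b : GBii := (conGen rel).mk' B
def c : GBii := (conGen rel).mk' C

/-!
Every element of `G⁺_{B_ii}` equals a normal form `a^p c^q` or `a^p c^q b a^r b^n`, and the
homomorphism to `ℕ³ ⋊ ℕ` (cyclic rotation action) taking `a ↦ e₀`, `c ↦ e₁`, `b ↦ (0, 1)`
reads `p, q, r, n` back off a normal form, so it is injective. In this model `bb·X = c·Y`
forces the `a`-coordinate of `X` to be positive, hence `X = a·Z`; then
`c·Y = bb·a·Z = c·bb·Z`, and `c` is left cancellable in the model, so `Y = bb·Z`.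
-/

lemma c_mul_b_mul_b : c * b * b = b * b * a :=
  (Con.eq _).mpr (ConGen.Rel.of _ _ (Or.inl ⟨rfl, rfl⟩))

lemma a_mul_b : a * b = b * c :=
  (Con.eq _).mpr (ConGen.Rel.of _ _ (Or.inr (Or.inl ⟨rfl, rfl⟩)))

lemma commute_a_c : Commute a c :=
  (Con.eq _).mpr (ConGen.Rel.of _ _ (Or.inr (Or.inr ⟨rfl, rfl⟩)))

lemma a_pow_mul_b (k : ℕ) : a ^ k * b = b * c ^ k := by
  induction k with
  | zero => simp
  | succ k ih => rw [pow_succ', mul_assoc, ih, ← mul_assoc, a_mul_b, mul_assoc, ← pow_succ']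

lemma c_pow_mul_b_mul_b (k : ℕ) : c ^ k * (b * b) = b * b * a ^ k := by
  induction k with
  | zero => simp
  | succ k ih =>
    rw [pow_succ, mul_assoc, ← mul_assoc c, c_mul_b_mul_b, ← mul_assoc, ih, mul_assoc,
      ← pow_succ]

lemma a_pow_mul_b_mul_a_pow (p q : ℕ) : a ^ q * b * a ^ p = b * a ^ p * c ^ q := by
  rw [a_pow_mul_b, mul_assoc, mul_assoc, (commute_a_c.pow_pow p q).eq]

lemma c_pow_mul_b_mul_a_pow_mul_b (p r : ℕ) :
    c ^ r * b * a ^ p * b = b * a ^ p * b * a ^ r := by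
  rw [mul_assoc _ (a ^ p), a_pow_mul_b, ← mul_assoc, mul_assoc (c ^ r), c_pow_mul_b_mul_b,
    mul_assoc, (commute_a_c.pow_pow r p).eq, mul_assoc b (a ^ p), a_pow_mul_b]
  simp only [mul_assoc]

lemma induction_on_mul_left {P : GBii → Prop} (one : P 1) (mul_a : ∀ X, P X → P (a * X))
    (mul_b : ∀ X, P X → P (b * X)) (mul_c : ∀ X, P X → P (c * X)) (X : GBii) : P X := by
  induction X using Con.induction_on with | _ w
  induction w using FreeMonoid.inductionOn' with
  | one => exact one
  | of_mul x w ih =>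
    rw [Con.coe_mul]
    fin_cases x
    exacts [mul_a _ ih, mul_b _ ih, mul_c _ ih]

open Fin.NatCast

/-- `ℕ³ ⋊ ℕ`, where `n : ℕ` acts on `ℕ³ = Fin 3 → ℕ` by rotating the coordinates `n` times. -/
@[ext] structure Model where
  v : Fin 3 → ℕ
  n : ℕ

namespace Model

instance : Monoid Model where
  one := ⟨0, 0⟩
  mul x y := ⟨fun i => x.v i + y.v (i + x.n), x.n + y.n⟩
  mul_assoc x y z := by
    ext i
    · show x.v i + y.v (i + x.n) + z.v (i + ((x.n + y.n : ℕ) : Fin 3))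
          = x.v i + (y.v (i + x.n) + z.v (i + x.n + y.n))
      rw [Nat.cast_add, ← add_assoc i, add_assoc]
    · exact add_assoc x.n y.n z.n
  one_mul x := by
    ext i
    · show 0 + x.v (i + ((0 : ℕ) : Fin 3)) = x.v i
      simp
    · exact zero_add x.n
  mul_one x := by
    ext i
    · exact add_zero (x.v i)
    · exact add_zero x.n

@[simp] lemma mul_v (x y : Model) (i : Fin 3) : (x * y).v i = x.v i + y.v (i + x.n) := rfl
@[simp] lemma mul_n (x y : Model) : (x * y).n = x.n + y.n := rfl

instance : IsLeftCancelMul Model where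
  mul_left_cancel x y z h := by
    ext i
    · simpa using congrFun (congrArg v h) (i - x.n)
    · exact Nat.add_left_cancel (congrArg n h)

end Model

def genModel : Fin 3 → Model := ![⟨Pi.single 0 1, 0⟩, ⟨0, 1⟩, ⟨Pi.single 1 1, 0⟩]

def toModel : GBii →* Model :=
  Con.lift _ (FreeMonoid.lift genModel) <| Con.conGen_le.mpr <| by
    rintro x y (⟨rfl, rfl⟩ | ⟨rfl, rfl⟩ | ⟨rfl, rfl⟩) <;>
    · show FreeMonoid.lift genModel _ = FreeMonoid.lift genModel _
      ext i
      · fin_cases i <;> simp [A, B, C, genModel]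
      · simp [A, B, C, genModel]

lemma toModel_a : toModel a = ⟨Pi.single 0 1, 0⟩ := rfl
lemma toModel_b : toModel b = ⟨0, 1⟩ := rfl
lemma toModel_c : toModel c = ⟨Pi.single 1 1, 0⟩ := rfl

lemma toModel_a_mul (x : Model) : toModel a * x = ⟨x.v + Pi.single 0 1, x.n⟩ := by
  ext i
  · fin_cases i <;> simp [toModel_a, add_comm]
  · simp [toModel_a]

lemma toModel_c_mul (x : Model) : toModel c * x = ⟨x.v + Pi.single 1 1, x.n⟩ := by
  ext i
  · fin_cases i <;> simp [toModel_c, add_comm]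
  · simp [toModel_c]

lemma toModel_b_mul (x : Model) : toModel b * x = ⟨fun i => x.v (i + 1), x.n + 1⟩ := by
  ext i
  · simp [toModel_b]
  · simp [toModel_b, add_comm]

-- The image of `toModel`: elements with no `b` have no `e₂`-component.
def IsReduced (x : Model) : Prop := x.n = 0 → x.v 2 = 0

-- Normal forms `a^p c^q` and `a^p c^q b a^r b^n`.
def ofModel : Model → GBii
  | ⟨v, 0⟩ => a ^ v 0 * c ^ v 1
  | ⟨v, n + 1⟩ => a ^ v 0 * c ^ v 1 * b * a ^ v 2 * b ^ n

lemma ofModel_toModel_a_mul (x : Model) : ofModel (toModel a * x) = a * ofModel x := by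
  rw [toModel_a_mul]
  obtain ⟨v, _ | n⟩ := x <;> simp [ofModel, pow_succ', mul_assoc]

lemma ofModel_toModel_c_mul (x : Model) : ofModel (toModel c * x) = c * ofModel x := by
  rw [toModel_c_mul]
  obtain ⟨v, _ | n⟩ := x <;>
    simp [ofModel, pow_succ', ← mul_assoc, (commute_a_c.pow_left _).eq]

lemma ofModel_toModel_b_mul {x : Model} (hx : IsReduced x) :
    ofModel (toModel b * x) = b * ofModel x := by
  rw [toModel_b_mul]
  obtain ⟨v, _ | n⟩ := x
  · have hx : v 2 = 0 := hx rfl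
    simp [ofModel, hx, a_pow_mul_b_mul_a_pow, ← mul_assoc]
  · calc a ^ v 1 * c ^ v 2 * b * a ^ v 0 * b ^ (n + 1)
        _ = a ^ v 1 * (c ^ v 2 * b * a ^ v 0 * b) * b ^ n := by simp only [pow_succ', mul_assoc]
        _ = a ^ v 1 * (b * a ^ v 0 * b * a ^ v 2) * b ^ n := by
          rw [c_pow_mul_b_mul_a_pow_mul_b]
        _ = a ^ v 1 * b * a ^ v 0 * b * a ^ v 2 * b ^ n := by simp only [mul_assoc]
        _ = b * ofModel ⟨v, n + 1⟩ := by rw [a_pow_mul_b_mul_a_pow]; simp only [ofModel, mul_assoc]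

lemma isReduced_toModel_and_ofModel_toModel (X : GBii) :
    IsReduced (toModel X) ∧ ofModel (toModel X) = X := by
  induction X using induction_on_mul_left with
  | one => exact ⟨fun _ => rfl, rfl⟩
  | mul_a X ih =>
    rw [map_mul, ofModel_toModel_a_mul, ih.2, toModel_a_mul]
    exact ⟨by simpa [IsReduced] using ih.1, rfl⟩
  | mul_b X ih =>
    rw [map_mul, ofModel_toModel_b_mul ih.1, ih.2, toModel_b_mul]
    exact ⟨nofun, rfl⟩
  | mul_c X ih =>
    rw [map_mul, ofModel_toModel_c_mul, ih.2, toModel_c_mul]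
    exact ⟨by simpa [IsReduced] using ih.1, rfl⟩

lemma toModel_injective : Function.Injective toModel :=
  Function.LeftInverse.injective fun X => (isReduced_toModel_and_ofModel_toModel X).2

lemma exists_eq_a_mul {X : GBii} (h : 0 < (toModel X).v 0) : ∃ Z, X = a * Z := by
  rw [← (isReduced_toModel_and_ofModel_toModel X).2]
  generalize toModel X = x at h
  obtain ⟨v, _ | n⟩ := x <;>
  · obtain ⟨p, hp⟩ : ∃ p, v 0 = p + 1 := Nat.exists_eq_add_one_of_ne_zero h.ne'
    exact ⟨_, by simp only [ofModel, hp, pow_succ', mul_assoc]; rfl⟩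

/-- Lemma 5.2: if `bb·X = c·Y` in `G⁺_{B_ii}`, then `X = a·Z` and `Y = bb·Z`
for some `Z`. -/
theorem stmt_15 (X Y : GBii) (h : b * b * X = c * Y) :
    ∃ Z : GBii, X = a * Z ∧ Y = b * b * Z := by
  have hX : 0 < (toModel X).v 0 := by
    have := congrArg (fun W => (toModel W).v 1) h
    simp only [map_mul, mul_assoc, toModel_b_mul, toModel_c_mul, Fin.reduceAdd, Pi.add_apply,
      Pi.single_eq_same] at this
    omega
  obtain ⟨Z, rfl⟩ := exists_eq_a_mul hX
  refine ⟨Z, rfl, toModel_injective (mul_left_cancel (a := toModel c) ?_)⟩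
  rw [← map_mul, ← map_mul, ← h, ← mul_assoc, ← c_mul_b_mul_b]
  simp only [mul_assoc]

end Bii
end
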